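/- The limit φ(z) := lim_{M→∞, M even} φ_M(z) exists for each z ∈ {−1,1} and equals min{ g(z), (g(z) + g(−z))/2 + β¹, (3g(z) + g(−z))/4 + (β¹ + β²)/2 }. -/
import Mathlib

noncomputable section

namespace DP3

/-- The energy of a one-dimensional chain of `M` spins with weak nearest-neighbour
interactions of coefficient `β¹/4`, weak next-to-nearest-neighbour interactions of
coefficient `β²/4` on the even sublattice, and forcing term `g`. -/
def en3 (g : ℝ → ℝ) (β₁ β₂ : ℝ) (M : ℕ) (v : ℕ → ℝ) : ℝ :=
  (∑ i ∈ Finset.Ico 1 M, β₁ / 4 * (v i - v (i - 1)) ^ 2) +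
    (∑ i ∈ (Finset.Ico 2 M).filter (fun i => Even i),
      β₂ / 4 * (v i - v (i - 2)) ^ 2) +
    ∑ i ∈ Finset.range M, g (v i)

/-- `φ_M(z)`: the minimal energy density over spin chains frozen at `z` on the odd
sublattice. -/
def phi3 (g : ℝ → ℝ) (β₁ β₂ z : ℝ) (M : ℕ) : ℝ :=
  sInf (en3 g β₁ β₂ M ''
    {v : ℕ → ℝ | (∀ i < M, v i = 1 ∨ v i = -1) ∧ ∀ i < M, Odd i → v i = z}) / M

def mcell (g : ℝ → ℝ) (β₁ β₂ z : ℝ) : ℝ :=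
  min (g z) (min (g (-z) + 2*β₁) ((g z + g (-z))/2 + β₁ + β₂))

lemma cell_le (g : ℝ → ℝ) (β₁ β₂ z : ℝ) (hz2 : z^2 = 1) (a b : ℝ)
    (ha : a = z ∨ a = -z) (hb : b = z ∨ b = -z) :
    mcell g β₁ β₂ z ≤ β₁/4*(z-a)^2 + β₁/4*(b-z)^2 + β₂/4*(b-a)^2 + (g a + g b)/2 := by
  have h1 : mcell g β₁ β₂ z ≤ g z := min_le_left _ _
  have h2 : mcell g β₁ β₂ z ≤ g (-z) + 2*β₁ :=
    le_trans (min_le_right _ _) (min_le_left _ _)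
  have h3 : mcell g β₁ β₂ z ≤ (g z + g (-z))/2 + β₁ + β₂ :=
    le_trans (min_le_right _ _) (min_le_right _ _)
  rcases ha with ha | ha <;> rcases hb with hb | hb <;> rw [ha, hb]
  · have e : β₁/4*(z-z)^2 + β₁/4*(z-z)^2 + β₂/4*(z-z)^2 + (g z + g z)/2 = g z := by ring
    linarith [e.ge]
  · have e : β₁/4*(z-z)^2 + β₁/4*(-z-z)^2 + β₂/4*(-z-z)^2 + (g z + g (-z))/2
      = (g z + g (-z))/2 + β₁*z^2 + β₂*z^2 := by ring
    rw [e, hz2]; linarith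
  · have e : β₁/4*(z-(-z))^2 + β₁/4*(z-z)^2 + β₂/4*(z-(-z))^2 + (g (-z) + g z)/2
      = (g z + g (-z))/2 + β₁*z^2 + β₂*z^2 := by ring
    rw [e, hz2]; linarith
  · have e : β₁/4*(z-(-z))^2 + β₁/4*(-z-z)^2 + β₂/4*(-z-(-z))^2 + (g (-z) + g (-z))/2
      = g (-z) + 2*β₁*z^2 := by ring
    rw [e, hz2]; linarith

lemma en3_step (g : ℝ → ℝ) (β₁ β₂ : ℝ) (M : ℕ) (hM : 2 ≤ M) (hM2 : Even M) (v : ℕ → ℝ) :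
    en3 g β₁ β₂ (M+2) v = en3 g β₁ β₂ M v
      + (β₁/4*(v M - v (M-1))^2 + β₁/4*(v (M+1) - v M)^2)
      + β₂/4*(v M - v (M-2))^2 + (g (v M) + g (v (M+1))) := by
  have hodd : ¬ Even (M+1) := by simp [Nat.even_add_one, hM2]
  unfold en3
  rw [show M + 2 = (M+1)+1 from rfl]
  rw [Finset.sum_Ico_succ_top (by omega), Finset.sum_Ico_succ_top (by omega)]
  rw [Finset.sum_filter, Finset.sum_filter,
    Finset.sum_Ico_succ_top (by omega : 2 ≤ M+1), Finset.sum_Ico_succ_top (by omega : 2 ≤ M)]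
  rw [Finset.sum_range_succ, Finset.sum_range_succ]
  simp only [Nat.add_sub_cancel, if_pos hM2, if_neg hodd]
  ring

lemma en3_lower (g : ℝ → ℝ) (β₁ β₂ z : ℝ) (hz2 : z^2 = 1) :
    ∀ N : ℕ, 1 ≤ N → ∀ v : ℕ → ℝ, (∀ i < 2*N, v i = z ∨ v i = -z) →
      (∀ i < 2*N, Odd i → v i = z) →
      (N : ℝ) * g z + ((N : ℝ) - 1) * mcell g β₁ β₂ z
        + (g (v 0) + g (v (2*N - 2)))/2 + β₁/4*(z - v (2*N - 2))^2
        ≤ en3 g β₁ β₂ (2*N) v := by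
  intro N hN1
  induction N, hN1 using Nat.le_induction with
  | base =>
    intro v hv hodd
    have h1 : v 1 = z := hodd 1 (by norm_num) ⟨0, by norm_num⟩
    unfold en3
    rw [show (2*1 : ℕ) = 2 from rfl]
    rw [show Finset.Ico 1 2 = {1} from rfl]
    have : (Finset.Ico 2 2).filter (fun i => Even i) = ∅ := by simp
    rw [this]
    rw [Finset.sum_range_succ, Finset.sum_range_succ]
    simp only [Finset.sum_singleton, Finset.sum_empty, Finset.sum_range_zero]
    rw [h1]
    norm_num
    ring_nf
    exact le_refl _
  | succ N hN ih =>
    intro v hv hodd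
    have h2N : (2 : ℕ) ≤ 2*N := by omega
    have heven : Even (2*N) := ⟨N, by ring⟩
    have hvm : ∀ i < 2*N, v i = z ∨ v i = -z := fun i hi => hv i (by omega)
    have hoddm : ∀ i < 2*N, Odd i → v i = z := fun i hi => hodd i (by omega)
    have ihv := ih v hvm hoddm
    have hstep := en3_step g β₁ β₂ (2*N) h2N heven v
    rw [show 2*(N+1) = 2*N + 2 from by ring]
    rw [hstep]
    have hz1 : v (2*N - 1) = z := hodd (2*N-1) (by omega)
      (by refine Nat.Even.sub_odd (by omega) heven ⟨0, rfl⟩)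
    have hz3 : v (2*N + 1) = z := hodd (2*N+1) (by omega) ⟨N, by ring⟩
    have ha : v (2*N - 2) = z ∨ v (2*N - 2) = -z := hv (2*N-2) (by omega)
    have hb : v (2*N) = z ∨ v (2*N) = -z := hv (2*N) (by omega)
    have hcell := cell_le g β₁ β₂ z hz2 (v (2*N-2)) (v (2*N)) ha hb
    rw [hz1, hz3]
    rw [show 2*N + 2 - 2 = 2*N from by omega]
    push_cast
    nlinarith [ihv, hcell]

lemma sum2 (c d : ℝ) (N : ℕ) :
    ∑ i ∈ Finset.range (2*N), (if Even i then c else d) = N*(c+d) := by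
  induction N with
  | zero => simp
  | succ N ih =>
    rw [show 2*(N+1) = (2*N+1)+1 from by ring, Finset.sum_range_succ,
      Finset.sum_range_succ, ih]
    have h1 : ¬ Even (2*N+1) := by simp [Nat.even_add_one]
    have h2 : Even (2*N) := ⟨N, by ring⟩
    rw [if_neg h1, if_pos h2]
    push_cast; ring

lemma sum_mod4 (f : ℕ → ℝ) (k : ℕ) :
    ∑ i ∈ Finset.range (4*k), f (i%4) = k*(f 0 + f 1 + f 2 + f 3) := by
  induction k with
  | zero => simp
  | succ k ih =>
    rw [show 4*(k+1) = (((4*k+1)+1)+1)+1 from by ring, Finset.sum_range_succ,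
      Finset.sum_range_succ, Finset.sum_range_succ, Finset.sum_range_succ, ih]
    rw [show (4*k) % 4 = 0 from by omega, show (4*k+1) % 4 = 1 from by omega,
      show (4*k+1+1) % 4 = 2 from by omega, show (4*k+1+1+1) % 4 = 3 from by omega]
    push_cast; ring

lemma sum_mod4' (f : ℕ → ℝ) (k : ℕ) :
    ∑ i ∈ Finset.range (4*k+2), f (i%4) = k*(f 0 + f 1 + f 2 + f 3) + f 0 + f 1 := by
  rw [show 4*k+2 = (4*k+1)+1 from rfl, Finset.sum_range_succ, Finset.sum_range_succ, sum_mod4,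
    show (4*k) % 4 = 0 from by omega, show (4*k+1) % 4 = 1 from by omega]

lemma en3_const (g : ℝ → ℝ) (β₁ β₂ z : ℝ) (M : ℕ) :
    en3 g β₁ β₂ M (fun _ => z) = M * g z := by
  unfold en3
  simp [Finset.sum_const, nsmul_eq_mul]

lemma en3_alt (g : ℝ → ℝ) (β₁ β₂ z : ℝ) (hz2 : z^2 = 1) (N : ℕ) (hN : 1 ≤ N) :
    en3 g β₁ β₂ (2*N) (fun i => if Even i then -z else z)
      = (2*(N:ℝ) - 1)*β₁ + N*(g (-z) + g z) := by
  unfold en3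
  have hA : ∑ i ∈ Finset.Ico 1 (2*N),
      β₁ / 4 * ((if Even i then -z else z) - (if Even (i-1) then -z else z)) ^ 2
      = (2*(N:ℝ) - 1)*β₁ := by
    rw [Finset.sum_congr rfl (g := fun _ => β₁) ?_]
    · rw [Finset.sum_const, Nat.card_Ico, nsmul_eq_mul]
      have : ((2*N - 1 : ℕ) : ℝ) = 2*(N:ℝ) - 1 := by
        push_cast [Nat.cast_sub (by omega : 1 ≤ 2*N)]; ring
      rw [this]
    · intro i hi
      simp only [Finset.mem_Ico] at hi
      rcases Nat.even_or_odd i with he | ho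
      · have h1 : ¬ Even (i-1) := by
          rw [Nat.even_iff] at he ⊢; omega
        rw [if_pos he, if_neg h1]; linear_combination β₁ * hz2
      · have h1 : Even (i-1) := by
          rw [Nat.odd_iff] at ho; rw [Nat.even_iff]; omega
        rw [if_neg (Nat.not_even_iff_odd.2 ho), if_pos h1]; linear_combination β₁ * hz2
  have hB : ∑ i ∈ (Finset.Ico 2 (2*N)).filter (fun i => Even i),
      β₂ / 4 * ((if Even i then -z else z) - (if Even (i-2) then -z else z)) ^ 2 = 0 := by
    apply Finset.sum_eq_zero
    intro i hi
    simp only [Finset.mem_filter, Finset.mem_Ico] at hi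
    have h1 : Even (i-2) ↔ Even i := by
      rw [Nat.even_iff, Nat.even_iff]; omega
    rcases em (Even i) with h | h
    · rw [if_pos h, if_pos (h1.2 h)]; ring
    · rw [if_neg h, if_neg (fun hh => h (h1.1 hh))]; ring
  have hC : ∑ i ∈ Finset.range (2*N), g (if Even i then -z else z) = N*(g (-z) + g z) := by
    rw [Finset.sum_congr rfl (g := fun i => if Even i then g (-z) else g z) ?_, sum2]
    intro i _
    rcases em (Even i) with h | h <;> simp [h]
  rw [hA, hB, hC]; ring

lemma en3_p4_le (g : ℝ → ℝ) (β₁ β₂ z : ℝ) (hz2 : z^2 = 1) (M : ℕ) (hM : 2 ≤ M)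
    (hM2 : Even M) :
    en3 g β₁ β₂ M (fun i => if i % 4 = 2 then -z else z)
      ≤ M * ((3*g z + g (-z))/4 + (β₁+β₂)/2)
        + (|g z| + |g (-z)| + |β₁| + |β₂|) := by
  set h : ℕ → ℝ := fun r => if r = 2 ∨ r = 3 then β₁ else 0 with hh
  set G : ℕ → ℝ := fun r => if r = 0 ∨ r = 2 then β₂ else 0 with hG
  set G₂ : ℕ → ℝ := fun r => if r = 2 then g (-z) else g z with hG₂
  have hA : (∑ i ∈ Finset.Ico 1 M,
      β₁ / 4 * ((if i % 4 = 2 then -z else z) - (if (i-1) % 4 = 2 then -z else z)) ^ 2)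
      = ∑ i ∈ Finset.range M, h (i%4) := by
    rw [Finset.range_eq_Ico, Finset.sum_eq_sum_Ico_succ_bot (by omega : 0 < M)]
    rw [show h (0 % 4) = 0 from by simp [hh], zero_add]
    apply Finset.sum_congr rfl
    intro i hi
    simp only [Finset.mem_Ico] at hi
    have h4 : i % 4 = 0 ∨ i % 4 = 1 ∨ i % 4 = 2 ∨ i % 4 = 3 := by omega
    rcases h4 with h4 | h4 | h4 | h4
    · rw [h4, show (i-1) % 4 = 3 from by omega]; simp [hh]
    · rw [h4, show (i-1) % 4 = 0 from by omega]; simp [hh]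
    · rw [h4, show (i-1) % 4 = 1 from by omega]; simp only [hh]
      norm_num; linear_combination β₁ * hz2
    · rw [h4, show (i-1) % 4 = 2 from by omega]; simp only [hh]
      norm_num; linear_combination β₁ * hz2
  have hB : (∑ i ∈ (Finset.Ico 2 M).filter (fun i => Even i),
      β₂ / 4 * ((if i % 4 = 2 then -z else z) - (if (i-2) % 4 = 2 then -z else z)) ^ 2)
      = (∑ i ∈ Finset.range M, G (i%4)) - β₂ := by
    rw [Finset.sum_filter, Finset.range_eq_Ico,
      Finset.sum_eq_sum_Ico_succ_bot (by omega : 0 < M),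
      Finset.sum_eq_sum_Ico_succ_bot (by omega : 1 < M)]
    rw [show G (0 % 4) = β₂ from by simp [hG], show G (1 % 4) = 0 from by simp [hG]]
    have : (∑ i ∈ Finset.Ico 2 M,
        if Even i then β₂ / 4 * ((if i % 4 = 2 then -z else z)
          - (if (i-2) % 4 = 2 then -z else z)) ^ 2 else 0)
        = ∑ i ∈ Finset.Ico 2 M, G (i%4) := by
      apply Finset.sum_congr rfl
      intro i hi
      simp only [Finset.mem_Ico] at hi
      have h4 : i % 4 = 0 ∨ i % 4 = 1 ∨ i % 4 = 2 ∨ i % 4 = 3 := by omega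
      rcases h4 with h4 | h4 | h4 | h4
      · have he : Even i := by rw [Nat.even_iff]; omega
        rw [if_pos he, h4, show (i-2) % 4 = 2 from by omega]; simp only [hG]
        norm_num; linear_combination β₂ * hz2
      · have he : ¬ Even i := by rw [Nat.even_iff]; omega
        rw [if_neg he, h4]; simp [hG]
      · have he : Even i := by rw [Nat.even_iff]; omega
        rw [if_pos he, h4, show (i-2) % 4 = 0 from by omega]; simp only [hG]
        norm_num; linear_combination β₂ * hz2
      · have he : ¬ Even i := by rw [Nat.even_iff]; omega
        rw [if_neg he, h4]; simp [hG]
    rw [this]; ring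
  have hC : (∑ i ∈ Finset.range M, g (if i % 4 = 2 then -z else z))
      = ∑ i ∈ Finset.range M, G₂ (i%4) := by
    apply Finset.sum_congr rfl
    intro i _
    rcases em (i % 4 = 2) with h4 | h4
    · rw [if_pos h4]; simp [hG₂, h4]
    · rw [if_neg h4]; simp [hG₂, h4]
  unfold en3
  rw [hA, hB, hC]
  have hm : M % 4 = 0 ∨ M % 4 = 2 := by
    rcases hM2 with ⟨m, hm⟩; omega
  have hvals : h 0 + h 1 + h 2 + h 3 = 2*β₁ ∧ G 0 + G 1 + G 2 + G 3 = 2*β₂ ∧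
      G₂ 0 + G₂ 1 + G₂ 2 + G₂ 3 = 3*g z + g (-z) := by
    refine ⟨?_, ?_, ?_⟩ <;> simp [hh, hG, hG₂] <;> ring
  obtain ⟨e1, e2, e3⟩ := hvals
  rcases hm with hm | hm
  · obtain ⟨k, hk⟩ : ∃ k, M = 4*k := ⟨M/4, by omega⟩
    subst hk
    rw [sum_mod4, sum_mod4, sum_mod4, e1, e2, e3]
    push_cast
    have hb2 : -β₂ ≤ |β₂| := neg_le_abs β₂
    have h0 : (0:ℝ) ≤ |g z| + |g (-z)| + |β₁| := by positivity
    have expand : (4*(k:ℝ)) * ((3*g z + g (-z))/4 + (β₁+β₂)/2)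
        = ↑k*(2*β₁) + ↑k*(2*β₂) + ↑k*(3*g z + g (-z)) := by ring
    linarith
  · obtain ⟨k, hk⟩ : ∃ k, M = 4*k+2 := ⟨M/4, by omega⟩
    subst hk
    rw [sum_mod4', sum_mod4', sum_mod4', e1, e2, e3]
    rw [show h 0 = 0 from by simp [hh], show h 1 = 0 from by simp [hh],
      show G 0 = β₂ from by simp [hG], show G 1 = 0 from by simp [hG],
      show G₂ 0 = g z from by simp [hG₂], show G₂ 1 = g z from by simp [hG₂]]
    push_cast
    have := abs_nonneg β₁
    have := abs_nonneg β₂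
    have ha1 := abs_nonneg (g z)
    have ha2 := abs_nonneg (g (-z))
    have h1 : g z - g (-z) ≤ |g z| + |g (-z)| := by
      cases abs_cases (g z) <;> cases abs_cases (g (-z)) <;> linarith
    have h2 : -β₁ ≤ |β₁| := neg_le_abs β₁
    have h3 : -β₂ ≤ |β₂| := neg_le_abs β₂
    have expand : (4*(k:ℝ)+2) * ((3*g z + g (-z))/4 + (β₁+β₂)/2)
        = ↑k*(2*β₁) + ↑k*(2*β₂) + ↑k*(3*g z + g (-z)) + (3*g z + g (-z))/2 + (β₁+β₂) := by ring
    linarith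

set_option maxHeartbeats 1000000 in
/-- The two-sided estimate on `phi3` for even `M ≥ 2`. -/
lemma phi3_est (g : ℝ → ℝ) (β₁ β₂ z : ℝ) (hz : z = 1 ∨ z = -1) (M : ℕ)
    (hM : 2 ≤ M) (hM2 : Even M) :
    |phi3 g β₁ β₂ z M - min (g z) (min ((g z + g (-z)) / 2 + β₁)
      ((3 * g z + g (-z)) / 4 + (β₁ + β₂) / 2))|
      ≤ (|g z| + |g (-z)| + |β₁| + |β₂| + |mcell g β₁ β₂ z|) / M := by
  have hz2 : z^2 = 1 := by rcases hz with h | h <;> rw [h] <;> norm_num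
  set L := min (g z) (min ((g z + g (-z)) / 2 + β₁)
      ((3 * g z + g (-z)) / 4 + (β₁ + β₂) / 2)) with hLdef
  set m' := mcell g β₁ β₂ z with hm'
  set CC := |g z| + |g (-z)| + |β₁| + |β₂| + |m'| with hCC
  have hCC0 : 0 ≤ CC := by rw [hCC]; positivity
  have hM0 : (0:ℝ) < M := by positivity
  obtain ⟨N, hNM⟩ : ∃ N, M = 2*N := ⟨M/2, by rcases hM2 with ⟨m, hm⟩; omega⟩
  have hN1 : 1 ≤ N := by omega
  have hL : L = g z/2 + m'/2 := by
    rw [hLdef, hm']; unfold mcell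
    simp only [min_def]; split_ifs <;> linarith
  -- the admissible set
  set S := en3 g β₁ β₂ M ''
    {v : ℕ → ℝ | (∀ i < M, v i = 1 ∨ v i = -1) ∧ ∀ i < M, Odd i → v i = z} with hS
  have hzz : ∀ w : ℝ, (w = 1 ∨ w = -1) → (w = z ∨ w = -z) := by
    intro w hw; rcases hz with h | h <;> rcases hw with hw | hw <;>
      rw [h, hw] <;> norm_num
  have hzz' : ∀ w : ℝ, (w = z ∨ w = -z) → (w = 1 ∨ w = -1) := by
    intro w hw; rcases hz with h | h <;> rcases hw with hw | hw <;>
      rw [hw, h] <;> norm_num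
  -- pointwise lower bound
  have hptwise : ∀ x ∈ S, (M:ℝ) * L - CC ≤ x := by
    rintro x ⟨v, ⟨hv1, hv2⟩, rfl⟩
    have hv1' : ∀ i < 2*N, v i = z ∨ v i = -z := fun i hi => hzz _ (hv1 i (by omega))
    have hv2' : ∀ i < 2*N, Odd i → v i = z := fun i hi => hv2 i (by omega)
    have hlow := en3_lower g β₁ β₂ z hz2 N hN1 v hv1' hv2'
    rw [hNM]
    have hb1 : -(|g z| + |g (-z)|) ≤ g (v 0) := by
      rcases hv1' 0 (by omega) with h | h <;> rw [h] <;>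
        [(have := neg_abs_le (g z); have := abs_nonneg (g (-z)); linarith);
         (have := neg_abs_le (g (-z)); have := abs_nonneg (g z); linarith)]
    have hb2 : -(|g z| + |g (-z)|) ≤ g (v (2*N - 2)) := by
      rcases hv1' (2*N-2) (by omega) with h | h <;> rw [h] <;>
        [(have := neg_abs_le (g z); have := abs_nonneg (g (-z)); linarith);
         (have := neg_abs_le (g (-z)); have := abs_nonneg (g z); linarith)]
    have hb3 : -|β₁| ≤ β₁/4*(z - v (2*N - 2))^2 := by
      rcases hv1' (2*N-2) (by omega) with h | h <;> rw [h]
      · have : β₁/4*(z - z)^2 = 0 := by ring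
        rw [this]; have := abs_nonneg β₁; linarith
      · have : β₁/4*(z - -z)^2 = β₁ * z^2 := by ring
        rw [this, hz2]; have := neg_abs_le β₁; linarith
    have hmabs : m' ≤ |m'| := le_abs_self m'
    have hb4 := abs_nonneg β₂
    -- M*L = N g z + N m'
    have : (((2*N : ℕ)):ℝ) * L = (N:ℝ) * g z + (N:ℝ) * m' := by
      rw [hL]; push_cast; ring
    rw [this, hCC]
    linarith
  have hne : S.Nonempty := by
    refine ⟨en3 g β₁ β₂ M (fun _ => z), ⟨fun _ => z, ⟨?_, ?_⟩, rfl⟩⟩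
    · intro i _; exact hz
    · intro i _ _; rfl
  have hbdd : BddBelow S := ⟨(M:ℝ) * L - CC, fun x hx => hptwise x hx⟩
  have hlow : (M:ℝ) * L - CC ≤ sInf S := le_csInf hne hptwise
  -- upper bounds
  have hup1 : sInf S ≤ (M:ℝ) * g z := by
    have hmem : (M:ℝ) * g z ∈ S := by
      refine ⟨fun _ => z, ⟨fun i _ => hz, fun i _ _ => rfl⟩, en3_const g β₁ β₂ z M⟩
    exact csInf_le hbdd hmem
  have hup2 : sInf S ≤ (M:ℝ) * ((g z + g (-z))/2 + β₁) + CC := by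
    have hmem : en3 g β₁ β₂ M (fun i => if Even i then -z else z) ∈ S := by
      refine ⟨fun i => if Even i then -z else z, ⟨?_, ?_⟩, rfl⟩
      · intro i _; dsimp only; rcases em (Even i) with h | h
        · rw [if_pos h]; exact hzz' _ (Or.inr rfl)
        · rw [if_neg h]; exact hzz' _ (Or.inl rfl)
      · intro i _ hi; dsimp only; rw [if_neg (Nat.not_even_iff_odd.2 hi)]
    have hval := en3_alt g β₁ β₂ z hz2 N hN1
    rw [← hNM] at hval
    have hle : en3 g β₁ β₂ M (fun i => if Even i then -z else z)
        ≤ (M:ℝ) * ((g z + g (-z))/2 + β₁) + CC := by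
      rw [hval]
      have hNc : (M:ℝ) = 2*(N:ℝ) := by rw [hNM]; push_cast; ring
      rw [hNc]
      have h1 : -β₁ ≤ |β₁| := neg_le_abs β₁
      have h0 : (0:ℝ) ≤ |g z| + |g (-z)| + |β₂| + |m'| := by positivity
      rw [hCC]; nlinarith
    exact le_trans (csInf_le hbdd hmem) hle
  have hup3 : sInf S ≤ (M:ℝ) * ((3*g z + g (-z))/4 + (β₁+β₂)/2) + CC := by
    have hmem : en3 g β₁ β₂ M (fun i => if i % 4 = 2 then -z else z) ∈ S := by
      refine ⟨fun i => if i % 4 = 2 then -z else z, ⟨?_, ?_⟩, rfl⟩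
      · intro i _; dsimp only; rcases em (i % 4 = 2) with h | h
        · rw [if_pos h]; exact hzz' _ (Or.inr rfl)
        · rw [if_neg h]; exact hzz' _ (Or.inl rfl)
      · intro i _ hi
        have : i % 4 ≠ 2 := by rw [Nat.odd_iff] at hi; omega
        dsimp only; rw [if_neg this]
    have hval := en3_p4_le g β₁ β₂ z hz2 M hM hM2
    have h0 : |g z| + |g (-z)| + |β₁| + |β₂| ≤ CC := by
      rw [hCC]; have := abs_nonneg m'; linarith
    exact le_trans (csInf_le hbdd hmem) (le_trans hval (by linarith))
  -- conclude
  have hphi : phi3 g β₁ β₂ z M = sInf S / M := rfl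
  rw [abs_sub_le_iff]
  constructor
  · -- phi3 - L ≤ CC / M : use upper bounds
    have key : sInf S ≤ (M:ℝ) * L + CC := by
      rcases min_choice (g z) (min ((g z + g (-z)) / 2 + β₁)
          ((3 * g z + g (-z)) / 4 + (β₁ + β₂) / 2)) with h | h
      · rw [hLdef, h]; linarith
      · rcases min_choice ((g z + g (-z)) / 2 + β₁)
            ((3 * g z + g (-z)) / 4 + (β₁ + β₂) / 2) with h' | h'
        · rw [hLdef, h, h']; linarith
        · rw [hLdef, h, h']; linarith
    rw [hphi]
    have h1 : sInf S / M ≤ ((M:ℝ)*L + CC)/M := (div_le_div_iff_of_pos_right hM0).2 key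
    have h2 : ((M:ℝ)*L + CC)/M = L + CC/M := by
      rw [add_div, mul_div_cancel_left₀ _ (ne_of_gt hM0)]
    linarith [h1, h2.le, h2.ge]
  · -- L - phi3 ≤ CC / M
    rw [hphi]
    have h1 : ((M:ℝ)*L - CC)/M ≤ sInf S / M := (div_le_div_iff_of_pos_right hM0).2 hlow
    have h2 : ((M:ℝ)*L - CC)/M = L - CC/M := by
      rw [sub_div, mul_div_cancel_left₀ _ (ne_of_gt hM0)]
    linarith [h1, h2.le, h2.ge]

end DP3

open DP3 in
/-- the limit `φ(z) = lim_{M→∞, M even} φ_M(z)` exists and equals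
`min{g(z), (g(z)+g(-z))/2 + β¹, (3g(z)+g(-z))/4 + (β¹+β²)/2}`. -/
theorem phi3_limit (g : ℝ → ℝ) (β₁ β₂ z : ℝ) (hz : z = 1 ∨ z = -1) :
    Filter.Tendsto (fun M : ℕ => phi3 g β₁ β₂ z M)
      (Filter.atTop ⊓ Filter.principal {M | Even M})
      (nhds (min (g z) (min ((g z + g (-z)) / 2 + β₁)
        ((3 * g z + g (-z)) / 4 + (β₁ + β₂) / 2)))) := by
  set L := min (g z) (min ((g z + g (-z)) / 2 + β₁)
      ((3 * g z + g (-z)) / 4 + (β₁ + β₂) / 2)) with hL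
  set C := |g z| + |g (-z)| + |β₁| + |β₂| + |mcell g β₁ β₂ z| with hC
  have hlow : Filter.Tendsto (fun M : ℕ => L - C/M)
      (Filter.atTop ⊓ Filter.principal {M | Even M}) (nhds L) := by
    have h1 : Filter.Tendsto (fun M : ℕ => L - C/M) Filter.atTop (nhds (L - 0)) :=
      tendsto_const_nhds.sub (tendsto_const_div_atTop_nhds_zero_nat C)
    rw [sub_zero] at h1
    exact h1.mono_left inf_le_left
  have hhigh : Filter.Tendsto (fun M : ℕ => L + C/M)
      (Filter.atTop ⊓ Filter.principal {M | Even M}) (nhds L) := by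
    have h1 : Filter.Tendsto (fun M : ℕ => L + C/M) Filter.atTop (nhds (L + 0)) :=
      tendsto_const_nhds.add (tendsto_const_div_atTop_nhds_zero_nat C)
    rw [add_zero] at h1
    exact h1.mono_left inf_le_left
  refine tendsto_of_tendsto_of_tendsto_of_le_of_le' hlow hhigh ?_ ?_
  · rw [Filter.eventually_inf_principal]
    filter_upwards [Filter.eventually_ge_atTop 2] with M hM hMe
    have := phi3_est g β₁ β₂ z hz M hM hMe
    rw [abs_sub_le_iff] at this
    linarith [this.2]
  · rw [Filter.eventually_inf_principal]
    filter_upwards [Filter.eventually_ge_atTop 2] with M hM hMe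
    have := phi3_est g β₁ β₂ z hz M hM hMe
    rw [abs_sub_le_iff] at this
    linarith [this.1]
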